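/- arXiv:2605.18994 — 3 statements merged into one kernel-verified Lean document; each statement's English description precedes it below -/
import Mathlib

section
/- Let Γ be a negative definite plumbing tree admitting an s-embedding φ into ℤ^N with φ(v) = e_k for some vertex v. Then the plumbing graph Γ' obtained from Γ by blowing down the vertex v admits an s-embedding into ℤ^{N−1}, obtained by composing φ with the orthogonal projection onto the orthogonal complement of e_k. Moreover, if φ has no basis elements of type 2, then the resulting s-embedding of Γ' also has no basis elements of type 2. -/
open Finset

/-- The `i`-th standard basis vector of `ℤ^N`. -/
def eVec {N : ℕ} (i : Fin N) : Fin N → ℤ := Pi.single i 1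

/-- The pairing of the diagonal lattice `(ℤ^N, ⟨-1⟩^N)`:
`⟨e i, e j⟩ = -δᵢⱼ`. -/
def diagPair {N : ℕ} (x y : Fin N → ℤ) : ℤ := -(∑ i, x i * y i)

/-- A plumbing graph: a finite set of vertices (a finite subset of `ℕ`), a symmetric
irreflexive adjacency relation supported on the vertices, and an integer framing
attached to each vertex. -/
structure Plumbing where
  verts : Finset ℕ
  adj : ℕ → ℕ → Bool
  adj_symm : ∀ u v, adj u v = adj v u
  adj_irrefl : ∀ v, adj v v = false
  adj_support : ∀ u v, adj u v = true → u ∈ verts ∧ v ∈ verts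
  framing : ℕ → ℤ

namespace Plumbing

/-- The underlying simple graph of a plumbing graph. -/
def toSG (G : Plumbing) : SimpleGraph ℕ where
  Adj u v := G.adj u v = true
  symm := by
    constructor
    intro u v h
    show G.adj v u = true
    rw [G.adj_symm v u]
    exact h
  loopless := by
    constructor
    intro v h
    simp [G.adj_irrefl v] at h

/-- The entries of the intersection matrix `Q_Γ`:
`q v v` is the framing, `q u v = 1` if `u,v` adjacent, `0` otherwise. -/
def q (G : Plumbing) (u v : ℕ) : ℤ :=
  if u = v then G.framing u else if G.adj u v = true then 1 else 0

/-- The intersection form `Q_Γ` on `ℤ^{V(Γ)}`; vectors are represented as functions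
`ℕ → ℤ` (only the values on the vertices matter). -/
def QF (G : Plumbing) (x y : ℕ → ℤ) : ℤ :=
  ∑ u ∈ G.verts, ∑ v ∈ G.verts, x u * y v * G.q u v

/-- The plumbing graph is a forest (acyclic). -/
def IsForest (G : Plumbing) : Prop := G.toSG.IsAcyclic

/-- The subset `S` of vertices induces a connected subgraph: any two of its
vertices are joined by a walk staying inside `S`. -/
def ConnOn (G : Plumbing) (S : Finset ℕ) : Prop :=
  ∀ u ∈ S, ∀ v ∈ S, ∃ p : G.toSG.Walk u v, ∀ x ∈ p.support, x ∈ S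

/-- The plumbing graph is a tree: acyclic and connected. -/
def IsTree (G : Plumbing) : Prop := G.IsForest ∧ G.ConnOn G.verts

/-- The intersection form is negative definite. -/
def NegDef (G : Plumbing) : Prop :=
  ∀ x : ℕ → ℤ, (∃ v ∈ G.verts, x v ≠ 0) → G.QF x x < 0

/-- The intersection form is negative semidefinite. -/
def NegSemiDef (G : Plumbing) : Prop := ∀ x : ℕ → ℤ, G.QF x x ≤ 0

/-- The degree (valency) of a vertex. -/
def degree (G : Plumbing) (v : ℕ) : ℕ :=
  (G.verts.filter fun u => G.adj v u = true).card

/-- An s-embedding of a plumbing graph into the diagonal lattice `ℤ^N`: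
an injective form-preserving linear map (recorded by the images `φ v` of
the vertices) such that the sum of the images of the vertices of every nonempty
connected subgraph has the form `e_γ - ∑_{j ∈ I} e_j` with `γ ∉ I`. -/
structure IsSEmb (G : Plumbing) {N : ℕ} (φ : ℕ → Fin N → ℤ) : Prop where
  pairing : ∀ u ∈ G.verts, ∀ v ∈ G.verts, diagPair (φ u) (φ v) = G.q u v
  indep : LinearIndependent ℤ (fun v : {x // x ∈ G.verts} => φ v.val)
  subgraphSum : ∀ S : Finset ℕ, S ⊆ G.verts → S.Nonempty → G.ConnOn S →
    ∃ (γ : Fin N) (I : Finset (Fin N)), γ ∉ I ∧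
      (∑ v ∈ S, φ v) = eVec γ - ∑ j ∈ I, eVec j

/-- A p-embedding of a plumbing graph into the diagonal lattice `ℤ^N`:
an injective form-preserving linear map such that the sum of the images of the
vertices of every nonempty connected subgraph has the form `e_γ - ∑_{j ∈ I} e_j`
with `γ ∉ I`, or the form `-∑_{j ∈ I} e_j`. -/
structure IsPEmb (G : Plumbing) {N : ℕ} (φ : ℕ → Fin N → ℤ) : Prop where
  pairing : ∀ u ∈ G.verts, ∀ v ∈ G.verts, diagPair (φ u) (φ v) = G.q u v
  indep : LinearIndependent ℤ (fun v : {x // x ∈ G.verts} => φ v.val)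
  subgraphSum : ∀ S : Finset ℕ, S ⊆ G.verts → S.Nonempty → G.ConnOn S →
    (∃ (γ : Fin N) (I : Finset (Fin N)), γ ∉ I ∧
      (∑ v ∈ S, φ v) = eVec γ - ∑ j ∈ I, eVec j) ∨
    (∃ I : Finset (Fin N), (∑ v ∈ S, φ v) = -(∑ j ∈ I, eVec j))

/-- The number of vertices `v` such that `e k` appears with coefficient `+1` in `φ v`. -/
def posCount (G : Plumbing) {N : ℕ} (φ : ℕ → Fin N → ℤ) (k : Fin N) : ℕ :=
  (G.verts.filter fun v => φ v k = 1).card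

/-- The number of vertices `v` such that `e k` appears with coefficient `-1` in `φ v`. -/
def negCount (G : Plumbing) {N : ℕ} (φ : ℕ → Fin N → ℤ) (k : Fin N) : ℕ :=
  (G.verts.filter fun v => φ v k = -1).card

/-- `e k` is of type 1: coefficient `+1` in exactly one vertex image, `-1` in none. -/
def IsType1 (G : Plumbing) {N : ℕ} (φ : ℕ → Fin N → ℤ) (k : Fin N) : Prop :=
  posCount G φ k = 1 ∧ negCount G φ k = 0

/-- `e k` is of type 2: coefficient `-1` in exactly one vertex image, `+1` in none. -/
def IsType2 (G : Plumbing) {N : ℕ} (φ : ℕ → Fin N → ℤ) (k : Fin N) : Prop :=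
  posCount G φ k = 0 ∧ negCount G φ k = 1

/-- `e k` is of type 3: coefficient `+1` in exactly one vertex image, `-1` in exactly one. -/
def IsType3 (G : Plumbing) {N : ℕ} (φ : ℕ → Fin N → ℤ) (k : Fin N) : Prop :=
  posCount G φ k = 1 ∧ negCount G φ k = 1

/-- `e k` is of type 4: coefficient `+1` in exactly one vertex image, `-1` in exactly two. -/
def IsType4 (G : Plumbing) {N : ℕ} (φ : ℕ → Fin N → ℤ) (k : Fin N) : Prop :=
  posCount G φ k = 1 ∧ negCount G φ k = 2

/-- `G'` is the vertex blowup of `G` at the vertex `v`, with new vertex `b`: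
`b` is a new `(-1)`-framed leaf joined to `v`, and the framing of `v` drops by 1. -/
structure VertexBlowup (G G' : Plumbing) (v b : ℕ) : Prop where
  v_mem : v ∈ G.verts
  b_new : b ∉ G.verts
  verts_eq : G'.verts = insert b G.verts
  adj_iff : ∀ x y, (G'.adj x y = true) ↔
    (G.adj x y = true ∨ (x = v ∧ y = b) ∨ (x = b ∧ y = v))
  framing_v : G'.framing v = G.framing v - 1
  framing_b : G'.framing b = -1
  framing_other : ∀ x ∈ G.verts, x ≠ v → G'.framing x = G.framing x

/-- `G'` is the edge blowup of `G` at the edge `(u,w)`, with new vertex `b`: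
the edge `(u,w)` is replaced by a new `(-1)`-framed vertex `b` joined to both
`u` and `w`, whose framings each drop by 1. -/
structure EdgeBlowup (G G' : Plumbing) (u w b : ℕ) : Prop where
  edge : G.adj u w = true
  b_new : b ∉ G.verts
  verts_eq : G'.verts = insert b G.verts
  adj_iff : ∀ x y, (G'.adj x y = true) ↔
    ((G.adj x y = true ∧ ¬((x = u ∧ y = w) ∨ (x = w ∧ y = u))) ∨
     (x = b ∧ (y = u ∨ y = w)) ∨ (y = b ∧ (x = u ∨ x = w)))
  framing_u : G'.framing u = G.framing u - 1
  framing_w : G'.framing w = G.framing w - 1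
  framing_b : G'.framing b = -1
  framing_other : ∀ x ∈ G.verts, x ≠ u → x ≠ w → G'.framing x = G.framing x

/-- `G'` is obtained from `G` by a single blowup (at a vertex or at an edge). -/
def BlowupStep (G G' : Plumbing) : Prop :=
  (∃ v b, VertexBlowup G G' v b) ∨ (∃ u w b, EdgeBlowup G G' u w b)

/-- `G` blows down to `Δ`: `Δ` is obtained from `G` by a finite sequence of
blowdowns, equivalently `G` is obtained from `Δ` by a finite sequence of blowups. -/
def BlowsDownTo (G Δ : Plumbing) : Prop :=
  Relation.ReflTransGen (fun X Y : Plumbing => BlowupStep Y X) G Δ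

/-- `G'` is obtained from `G` by blowing down the vertex `v`,
i.e. `G` is a one-step blowup of `G'` whose new vertex is `v`. -/
def BlowdownAt (G G' : Plumbing) (v : ℕ) : Prop :=
  (∃ u, VertexBlowup G' G u v) ∨ (∃ u w, EdgeBlowup G' G u w v)

/-- The empty plumbing graph. -/
def IsEmptyGraph (G : Plumbing) : Prop := G.verts = ∅

/-- `G` blows down to the empty graph. -/
def BlowsDownToEmpty (G : Plumbing) : Prop :=
  ∃ E : Plumbing, E.IsEmptyGraph ∧ BlowsDownTo G E

/-- A single-vertex plumbing graph with framing `0`. -/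
def IsZeroVertexGraph (G : Plumbing) : Prop :=
  ∃ v, G.verts = {v} ∧ G.framing v = 0

/-- `G` blows down to the single-vertex graph with framing `0`. -/
def BlowsDownToZeroVertex (G : Plumbing) : Prop :=
  ∃ Z : Plumbing, Z.IsZeroVertexGraph ∧ BlowsDownTo G Z

/-- `G` is an induced subgraph of `H` with the same framings. -/
def IsInducedSubgraph (G H : Plumbing) : Prop :=
  G.verts ⊆ H.verts ∧
  (∀ u ∈ G.verts, ∀ v ∈ G.verts, G.adj u v = H.adj u v) ∧
  (∀ v ∈ G.verts, G.framing v = H.framing v)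

/-- `G` is sandwiched: it is an induced subgraph (with the same framings) of a
plumbing graph that blows down to the empty graph. -/
def Sandwiched (G : Plumbing) : Prop :=
  ∃ H : Plumbing, BlowsDownToEmpty H ∧ IsInducedSubgraph G H

/-- `G` is a planar multilink (pm) graph: it is an induced subgraph (with the same
framings) of a negative semidefinite plumbing graph that blows down to the
single-vertex graph with framing `0`. -/
def IsPM (G : Plumbing) : Prop :=
  ∃ H : Plumbing, H.NegSemiDef ∧ BlowsDownToZeroVertex H ∧ IsInducedSubgraph G H

/-- `H` is obtained from `G` by attaching finitely many new leaves with framing `-1`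
to vertices of `G`. -/
def AugmentedByLeaves (G H : Plumbing) : Prop :=
  IsInducedSubgraph G H ∧
  ∀ x ∈ H.verts, x ∉ G.verts →
    H.framing x = -1 ∧ ∃ v ∈ G.verts, ∀ y, (H.adj x y = true ↔ y = v)

/-- `H` is obtained from `G` by attaching a single new leaf `l` with framing `fr`
to the vertex `v`. -/
structure AttachLeaf (G H : Plumbing) (v l : ℕ) (fr : ℤ) : Prop where
  v_mem : v ∈ G.verts
  l_new : l ∉ G.verts
  verts_eq : H.verts = insert l G.verts
  adj_iff : ∀ x y, (H.adj x y = true) ↔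
    (G.adj x y = true ∨ (x = v ∧ y = l) ∨ (x = l ∧ y = v))
  framing_l : H.framing l = fr
  framing_other : ∀ x ∈ G.verts, H.framing x = G.framing x

/-- The plumbing graph obtained from `G` by decreasing the framing of `v` by `1`,
keeping all other framings and all edges. -/
def decFraming (G : Plumbing) (v : ℕ) : Plumbing :=
  { G with framing := Function.update G.framing v (G.framing v - 1) }

/-- The plumbing graph obtained from `G` by increasing the framing of `v` by `1`,
keeping all other framings and all edges. -/
def incFraming (G : Plumbing) (v : ℕ) : Plumbing :=
  { G with framing := Function.update G.framing v (G.framing v + 1) }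

/-- Membership in the Lipman cone `𝒮(Γ)`: all coordinates positive and
`Q_Γ(D, v) ≤ 0` for every vertex `v`. -/
def InLipman (G : Plumbing) (r : ℕ → ℤ) : Prop :=
  (∀ v ∈ G.verts, 0 < r v) ∧
  (∀ v ∈ G.verts, (∑ u ∈ G.verts, r u * G.q u v) ≤ 0)

end Plumbing

open Plumbing


section AuxStmt6

/-- Lift a walk edge-by-edge. -/
lemma walk_lift {A B : SimpleGraph ℕ} {S T : Finset ℕ} (hST : S ⊆ T)
    (h : ∀ x ∈ S, ∀ y ∈ S, A.Adj x y → ∃ q : B.Walk x y, ∀ z ∈ q.support, z ∈ T)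
    {a b : ℕ} (p : A.Walk a b) (hp : ∀ z ∈ p.support, z ∈ S) :
    ∃ q : B.Walk a b, ∀ z ∈ q.support, z ∈ T := by
  induction p with
  | nil =>
      refine ⟨.nil, ?_⟩
      intro z hz
      rw [SimpleGraph.Walk.support_nil, List.mem_singleton] at hz
      subst hz
      exact hST (hp _ (by simp))
  | @cons x y b' hadj p ih =>
      have hx : x ∈ S := hp x (by rw [SimpleGraph.Walk.support_cons]; exact List.mem_cons_self)
      have hy : y ∈ S := hp y (by
        rw [SimpleGraph.Walk.support_cons]
        exact List.mem_cons_of_mem _ p.start_mem_support)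
      obtain ⟨q1, hq1⟩ := h x hx y hy hadj
      obtain ⟨q2, hq2⟩ := ih (fun z hz => hp z (by
        rw [SimpleGraph.Walk.support_cons]; exact List.mem_cons_of_mem _ hz))
      refine ⟨q1.append q2, ?_⟩
      intro z hz
      rcases (SimpleGraph.Walk.mem_support_append_iff q1 q2).1 hz with h1 | h2
      · exact hq1 z h1
      · exact hq2 z h2

lemma eVec_sum_apply {n : ℕ} (j : Fin n) (J : Finset (Fin n)) :
    (∑ i ∈ J, eVec i) j = if j ∈ J then (1:ℤ) else 0 := by
  classical
  rw [Finset.sum_apply]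
  have h : ∀ i ∈ J, eVec i j = if j = i then (1:ℤ) else 0 := by
    intro i _; exact Pi.single_apply i 1 j
  rw [Finset.sum_congr rfl h, Finset.sum_ite_eq J j (fun _ => (1:ℤ))]

/-- The value at `k` of an s-embedding image, when `φ v = e k`. -/
lemma phi_val {N : ℕ} {G : Plumbing} {φ : ℕ → Fin (N+1) → ℤ}
    (hpair : ∀ u ∈ G.verts, ∀ w ∈ G.verts, diagPair (φ u) (φ w) = G.q u w)
    {v : ℕ} (hv : v ∈ G.verts) {k : Fin (N+1)} (hvk : φ v = eVec k)
    {x : ℕ} (hx : x ∈ G.verts) (hxv : x ≠ v) :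
    φ x k = if G.adj x v = true then -1 else 0 := by
  classical
  have h := hpair x hx v hv
  rw [hvk] at h
  have hL : diagPair (φ x) (eVec k) = -(φ x k) := by
    unfold diagPair eVec
    congr 1
    simp [Pi.single_apply, mul_ite]
  rw [hL] at h
  unfold Plumbing.q at h
  rw [if_neg hxv] at h
  by_cases hadj : G.adj x v = true
  · rw [if_pos hadj] at h; rw [if_pos hadj]; omega
  · rw [if_neg hadj] at h; rw [if_neg hadj]; omega

end AuxStmt6

/-- STATEMENT 6: blowing down a vertex `v` with `φ v = e k` yields a graph with an
s-embedding into `ℤ^{N-1}`, obtained by composing `φ` with the orthogonal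
projection onto the complement of `e k` (i.e. deleting the `k`-th coordinate);
moreover, if `φ` has no type 2 basis elements, neither does the new embedding. -/
theorem stmt6_blowdown {N : ℕ} (G : Plumbing) (hTree : G.IsTree)
    (hNeg : G.NegDef) (φ : ℕ → Fin (N + 1) → ℤ) (hφ : G.IsSEmb φ)
    (v : ℕ) (hv : v ∈ G.verts) (k : Fin (N + 1)) (hvk : φ v = eVec k)
    (G' : Plumbing) (hbd : BlowdownAt G G' v) :
    G'.IsSEmb (fun x => fun i : Fin N => φ x (k.succAbove i)) ∧
    ((∀ j : Fin (N + 1), ¬ IsType2 G φ j) →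
      ∀ j : Fin N, ¬ IsType2 G' (fun x => fun i : Fin N => φ x (k.succAbove i)) j) := by
  classical
  have hpair := hφ.pairing
  obtain ⟨hvnot, hverts, hq, hconn⟩ :
      v ∉ G'.verts ∧ G.verts = insert v G'.verts ∧
      (∀ x ∈ G'.verts, ∀ y ∈ G'.verts, G'.q x y = G.q x y + φ x k * φ y k) ∧
      (∀ S : Finset ℕ, S ⊆ G'.verts → S.Nonempty → G'.ConnOn S →
        ∃ T : Finset ℕ, S ⊆ T ∧ T ⊆ G.verts ∧ G.ConnOn T ∧
          (T = S ∨ (T = insert v S ∧ (∑ x ∈ S, φ x k) ≤ -1))) := by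
    rcases hbd with ⟨u, hb⟩ | ⟨u, w, hb⟩
    · -- vertex blowup
      refine ⟨hb.b_new, hb.verts_eq, ?_, ?_⟩
      · have hadjv : ∀ x ∈ G'.verts, (G.adj x v = true ↔ x = u) := by
          intro x hx
          rw [hb.adj_iff]
          constructor
          · rintro (h | ⟨rfl, -⟩ | ⟨rfl, h⟩)
            · exact absurd (G'.adj_support x v h).2 hb.b_new
            · rfl
            · exact absurd hx hb.b_new
          · rintro rfl
            exact Or.inr (Or.inl ⟨rfl, rfl⟩)
        have hφk : ∀ x ∈ G'.verts, φ x k = if x = u then -1 else 0 := by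
          intro x hx
          rw [phi_val hpair hv hvk (by rw [hb.verts_eq]; exact Finset.mem_insert_of_mem hx)
            (fun h => hb.b_new (h ▸ hx))]
          by_cases hxu : x = u
          · rw [if_pos ((hadjv x hx).2 hxu), if_pos hxu]
          · rw [if_neg (fun h => hxu ((hadjv x hx).1 h)), if_neg hxu]
        have hadjiff : ∀ x ∈ G'.verts, ∀ y ∈ G'.verts,
            (G.adj x y = true ↔ G'.adj x y = true) := by
          intro x hx y hy
          rw [hb.adj_iff]
          constructor
          · rintro (h | ⟨rfl, rfl⟩ | ⟨rfl, rfl⟩)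
            · exact h
            · exact absurd hy hb.b_new
            · exact absurd hx hb.b_new
          · exact Or.inl
        intro x hx y hy
        unfold Plumbing.q
        by_cases hxy : x = y
        · subst hxy
          rw [if_pos rfl, if_pos rfl, hφk x hx]
          by_cases hxu : x = u
          · subst hxu
            rw [if_pos rfl, hb.framing_v]
            ring
          · rw [if_neg hxu, hb.framing_other x hx hxu]
            ring
        · rw [if_neg hxy, if_neg hxy, hφk x hx, hφk y hy]
          have hprod : (if x = u then (-1:ℤ) else 0) * (if y = u then -1 else 0) = 0 := by
            by_cases hxu : x = u
            · have hyu : y ≠ u := fun h => hxy (hxu.trans h.symm)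
              rw [if_neg hyu, mul_zero]
            · rw [if_neg hxu, zero_mul]
          rw [hprod, add_zero]
          exact if_congr (hadjiff x hx y hy).symm rfl rfl
      · intro S hS hSne hSconn
        refine ⟨S, Finset.Subset.refl S,
          hS.trans (by rw [hb.verts_eq]; exact Finset.subset_insert _ _), ?_, Or.inl rfl⟩
        intro a ha b hb2
        obtain ⟨p, hp⟩ := hSconn a ha b hb2
        refine walk_lift (Finset.Subset.refl S) ?_ p hp
        intro x hx y hy hadj
        have hGxy : G.toSG.Adj x y := (hb.adj_iff x y).2 (Or.inl hadj)
        refine ⟨SimpleGraph.Walk.cons hGxy SimpleGraph.Walk.nil, ?_⟩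
        intro z hz
        simp only [SimpleGraph.Walk.support_cons, SimpleGraph.Walk.support_nil] at hz
        rcases List.mem_cons.1 hz with rfl | hz
        · exact hx
        · rw [List.mem_singleton] at hz
          subst hz
          exact hy
    · -- edge blowup
      have hu : u ∈ G'.verts := (G'.adj_support u w hb.edge).1
      have hw : w ∈ G'.verts := (G'.adj_support u w hb.edge).2
      have huw : u ≠ w := by
        intro h
        have e := hb.edge
        rw [h, G'.adj_irrefl w] at e
        simp at e
      refine ⟨hb.b_new, hb.verts_eq, ?_, ?_⟩
      · have hadjv : ∀ x ∈ G'.verts, (G.adj x v = true ↔ (x = u ∨ x = w)) := by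
          intro x hx
          rw [hb.adj_iff]
          constructor
          · rintro (⟨h, -⟩ | ⟨rfl, -⟩ | ⟨-, h⟩)
            · exact absurd (G'.adj_support x v h).2 hb.b_new
            · exact absurd hx hb.b_new
            · exact h
          · intro h
            exact Or.inr (Or.inr ⟨rfl, h⟩)
        have hφk : ∀ x ∈ G'.verts, φ x k = if (x = u ∨ x = w) then -1 else 0 := by
          intro x hx
          rw [phi_val hpair hv hvk (by rw [hb.verts_eq]; exact Finset.mem_insert_of_mem hx)
            (fun h => hb.b_new (h ▸ hx))]
          by_cases hxu : x = u ∨ x = w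
          · rw [if_pos ((hadjv x hx).2 hxu), if_pos hxu]
          · rw [if_neg (fun h => hxu ((hadjv x hx).1 h)), if_neg hxu]
        have hadjiff : ∀ x ∈ G'.verts, ∀ y ∈ G'.verts,
            (G.adj x y = true ↔ (G'.adj x y = true ∧ ¬((x = u ∧ y = w) ∨ (x = w ∧ y = u)))) := by
          intro x hx y hy
          rw [hb.adj_iff]
          constructor
          · rintro (h | ⟨rfl, -⟩ | ⟨rfl, -⟩)
            · exact h
            · exact absurd hx hb.b_new
            · exact absurd hy hb.b_new
          · exact Or.inl
        intro x hx y hy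
        unfold Plumbing.q
        by_cases hxy : x = y
        · subst hxy
          rw [if_pos rfl, if_pos rfl, hφk x hx]
          by_cases hxu : x = u
          · subst hxu
            rw [if_pos (Or.inl rfl), hb.framing_u]
            ring
          · by_cases hxw : x = w
            · subst hxw
              rw [if_pos (Or.inr rfl), hb.framing_w]
              ring
            · rw [if_neg (by tauto), hb.framing_other x hx hxu hxw]
              ring
        · rw [if_neg hxy, if_neg hxy, hφk x hx, hφk y hy]
          by_cases hpr : (x = u ∧ y = w) ∨ (x = w ∧ y = u)
          · have hG'xy : G'.adj x y = true := by
              rcases hpr with ⟨rfl, rfl⟩ | ⟨rfl, rfl⟩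
              · exact hb.edge
              · rw [G'.adj_symm]; exact hb.edge
            have hGxy : ¬(G.adj x y = true) := by
              rw [hadjiff x hx y hy]
              rintro ⟨-, hn⟩
              exact hn hpr
            rw [if_pos hG'xy, if_neg hGxy]
            rcases hpr with ⟨rfl, rfl⟩ | ⟨rfl, rfl⟩
            · rw [if_pos (Or.inl rfl), if_pos (Or.inr rfl)]; ring
            · rw [if_pos (Or.inr rfl), if_pos (Or.inl rfl)]; ring
          · have hprod : (if (x = u ∨ x = w) then (-1:ℤ) else 0) *
                (if (y = u ∨ y = w) then -1 else 0) = 0 := by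
              by_cases h1 : x = u ∨ x = w
              · have h2 : ¬(y = u ∨ y = w) := by
                  rintro (rfl | rfl)
                  · rcases h1 with rfl | rfl
                    · exact hxy rfl
                    · exact hpr (Or.inr ⟨rfl, rfl⟩)
                  · rcases h1 with rfl | rfl
                    · exact hpr (Or.inl ⟨rfl, rfl⟩)
                    · exact hxy rfl
                rw [if_neg h2, mul_zero]
              · rw [if_neg h1, zero_mul]
            rw [hprod, add_zero]
            refine if_congr ?_ rfl rfl
            rw [hadjiff x hx y hy]
            exact (and_iff_left hpr).symm
      · intro S hS hSne hSconn
        by_cases hcase : u ∈ S ∧ w ∈ S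
        · refine ⟨insert v S, Finset.subset_insert _ _, ?_, ?_, Or.inr ⟨rfl, ?_⟩⟩
          · rw [hb.verts_eq]
            exact Finset.insert_subset_insert _ hS
          · -- connectivity of insert v S in G
            have hedge : ∀ x ∈ S, ∀ y ∈ S, G'.toSG.Adj x y →
                ∃ q : G.toSG.Walk x y, ∀ z ∈ q.support, z ∈ insert v S := by
              intro x hx y hy hadj
              by_cases hp1 : (x = u ∧ y = w) ∨ (x = w ∧ y = u)
              · have e1 : G.toSG.Adj x v :=
                  (hb.adj_iff x v).2 (Or.inr (Or.inr ⟨rfl, by tauto⟩))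
                have e2 : G.toSG.Adj v y :=
                  (hb.adj_iff v y).2 (Or.inr (Or.inl ⟨rfl, by tauto⟩))
                refine ⟨SimpleGraph.Walk.cons e1 (SimpleGraph.Walk.cons e2 SimpleGraph.Walk.nil), ?_⟩
                intro z hz
                simp only [SimpleGraph.Walk.support_cons, SimpleGraph.Walk.support_nil] at hz
                rcases List.mem_cons.1 hz with rfl | hz
                · exact Finset.mem_insert_of_mem hx
                rcases List.mem_cons.1 hz with rfl | hz
                · exact Finset.mem_insert_self _ _
                · rw [List.mem_singleton] at hz
                  subst hz
                  exact Finset.mem_insert_of_mem hy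
              · have hGxy : G.toSG.Adj x y := (hb.adj_iff x y).2 (Or.inl ⟨hadj, hp1⟩)
                refine ⟨SimpleGraph.Walk.cons hGxy SimpleGraph.Walk.nil, ?_⟩
                intro z hz
                simp only [SimpleGraph.Walk.support_cons, SimpleGraph.Walk.support_nil] at hz
                rcases List.mem_cons.1 hz with rfl | hz
                · exact Finset.mem_insert_of_mem hx
                · rw [List.mem_singleton] at hz
                  subst hz
                  exact Finset.mem_insert_of_mem hy
            have hw1 : ∀ a ∈ S, ∀ b ∈ S,
                ∃ q : G.toSG.Walk a b, ∀ z ∈ q.support, z ∈ insert v S := by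
              intro a ha b hb2
              obtain ⟨p, hp⟩ := hSconn a ha b hb2
              exact walk_lift (Finset.subset_insert _ _) hedge p hp
            have hev : G.toSG.Adj v u :=
              (hb.adj_iff v u).2 (Or.inr (Or.inl ⟨rfl, Or.inl rfl⟩))
            intro a ha b hb2
            rcases Finset.mem_insert.1 ha with rfl | haS
            · rcases Finset.mem_insert.1 hb2 with rfl | hbS
              · refine ⟨SimpleGraph.Walk.nil, ?_⟩
                intro z hz
                rw [SimpleGraph.Walk.support_nil, List.mem_singleton] at hz
                subst hz
                exact Finset.mem_insert_self _ _
              · obtain ⟨q, hq2⟩ := hw1 u hcase.1 b hbS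
                refine ⟨SimpleGraph.Walk.cons hev q, ?_⟩
                intro z hz
                rw [SimpleGraph.Walk.support_cons] at hz
                rcases List.mem_cons.1 hz with rfl | hz
                · exact Finset.mem_insert_self _ _
                · exact hq2 z hz
            · rcases Finset.mem_insert.1 hb2 with rfl | hbS
              · obtain ⟨q, hq2⟩ := hw1 u hcase.1 a haS
                refine ⟨(SimpleGraph.Walk.cons hev q).reverse, ?_⟩
                intro z hz
                rw [SimpleGraph.Walk.support_reverse, List.mem_reverse,
                  SimpleGraph.Walk.support_cons] at hz
                rcases List.mem_cons.1 hz with rfl | hz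
                · exact Finset.mem_insert_self _ _
                · exact hq2 z hz
              · exact hw1 a haS b hbS
          · -- sum bound
            have hterm : ∀ x ∈ S, φ x k ≤ 0 := by
              intro x hx
              rw [phi_val hpair hv hvk
                (by rw [hb.verts_eq]; exact Finset.mem_insert_of_mem (hS hx))
                (fun h => hb.b_new (h ▸ hS hx))]
              split <;> omega
            have hu1 : φ u k = -1 := by
              rw [phi_val hpair hv hvk
                (by rw [hb.verts_eq]; exact Finset.mem_insert_of_mem hu)
                (fun h => hb.b_new (h ▸ hu))]
              rw [if_pos ((hb.adj_iff u v).2 (Or.inr (Or.inr ⟨rfl, Or.inl rfl⟩)))]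
            have hsplit := Finset.add_sum_erase S (fun x => φ x k) hcase.1
            have hrest : ∑ x ∈ S.erase u, φ x k ≤ 0 :=
              Finset.sum_nonpos fun x hx => hterm x (Finset.mem_of_mem_erase hx)
            linarith
        · refine ⟨S, Finset.Subset.refl S,
            hS.trans (by rw [hb.verts_eq]; exact Finset.subset_insert _ _), ?_, Or.inl rfl⟩
          intro a ha b hb2
          obtain ⟨p, hp⟩ := hSconn a ha b hb2
          refine walk_lift (Finset.Subset.refl S) ?_ p hp
          intro x hx y hy hadj
          have hnp : ¬((x = u ∧ y = w) ∨ (x = w ∧ y = u)) := by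
            rintro (⟨rfl, rfl⟩ | ⟨rfl, rfl⟩)
            · exact hcase ⟨hx, hy⟩
            · exact hcase ⟨hy, hx⟩
          have hGxy : G.toSG.Adj x y := (hb.adj_iff x y).2 (Or.inl ⟨hadj, hnp⟩)
          refine ⟨SimpleGraph.Walk.cons hGxy SimpleGraph.Walk.nil, ?_⟩
          intro z hz
          simp only [SimpleGraph.Walk.support_cons, SimpleGraph.Walk.support_nil] at hz
          rcases List.mem_cons.1 hz with rfl | hz
          · exact hx
          · rw [List.mem_singleton] at hz
            subst hz
            exact hy
  have hsubV : G'.verts ⊆ G.verts := by rw [hverts]; exact Finset.subset_insert _ _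
  have hxnev : ∀ x ∈ G'.verts, x ≠ v := by
    intro x hx h; exact hvnot (h ▸ hx)
  have hφk0 : ∀ x ∈ G'.verts, φ x k ≤ 0 := by
    intro x hx
    rw [phi_val hpair hv hvk (hsubV hx) (hxnev x hx)]
    split <;> omega
  have hvkcoord : φ v k = 1 := by rw [hvk]; simp [eVec]
  have hvother : ∀ i : Fin N, φ v (k.succAbove i) = 0 := by
    intro i; rw [hvk]
    exact Pi.single_eq_of_ne (Fin.succAbove_ne k i) 1
  constructor
  · constructor
    · -- pairing
      intro x hx y hy
      show -(∑ i : Fin N, φ x (k.succAbove i) * φ y (k.succAbove i)) = G'.q x y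
      have hsum := Fin.sum_univ_succAbove (fun i => φ x i * φ y i) k
      have hp := hpair x (hsubV hx) y (hsubV hy)
      unfold diagPair at hp
      rw [hq x hx y hy, ← hp]
      linarith [hsum]
    · -- independence
      rw [Fintype.linearIndependent_iff]
      intro g hg
      set gg : ℕ → ℤ := fun x => if hx : x ∈ G'.verts then g ⟨x, hx⟩ else 0 with hgg
      have hggval : ∀ (x : {x // x ∈ G'.verts}), gg x.1 = g x := by
        intro x; rw [hgg]; simp only [x.2, dif_pos]
      have hsubty : ∀ (F : ℕ → Fin N → ℤ),
          (∑ x : {x // x ∈ G'.verts}, g x • F x.1) = ∑ x ∈ G'.verts, gg x • F x := by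
        intro F
        rw [← Finset.sum_attach G'.verts (fun x => gg x • F x), Finset.univ_eq_attach]
        exact Finset.sum_congr rfl (fun x _ => by rw [hggval])
      have hgi : ∀ i : Fin N, ∑ x ∈ G'.verts, gg x * φ x (k.succAbove i) = 0 := by
        intro i
        have h1 := congrFun hg i
        rw [hsubty (fun x => fun i => φ x (k.succAbove i))] at h1
        simpa [Finset.sum_apply] using h1
      set t : ℤ := ∑ x ∈ G'.verts, gg x * φ x k with ht
      set Gg : {x // x ∈ G.verts} → ℤ := fun x => if x.1 = v then -t else gg x.1 with hGg
      have hzero : ∑ x : {x // x ∈ G.verts}, Gg x • φ x.1 = 0 := by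
        have h1 : ∑ x : {x // x ∈ G.verts}, Gg x • φ x.1
            = ∑ x ∈ G.verts, (if x = v then -t else gg x) • φ x := by
          rw [← Finset.sum_attach G.verts (fun x => (if x = v then -t else gg x) • φ x),
            Finset.univ_eq_attach]
        rw [h1, hverts, Finset.sum_insert hvnot, if_pos rfl]
        have h2 : ∀ x ∈ G'.verts, (if x = v then -t else gg x) • φ x = gg x • φ x := by
          intro x hx; rw [if_neg (hxnev x hx)]
        rw [Finset.sum_congr rfl h2]
        funext j
        rcases eq_or_ne j k with rfl | hjk
        · simp only [Pi.add_apply, Pi.smul_apply, smul_eq_mul, Finset.sum_apply, Pi.zero_apply]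
          rw [hvkcoord, ht]
          ring
        · obtain ⟨i, rfl⟩ := Fin.exists_succAbove_eq hjk
          simp only [Pi.add_apply, Pi.smul_apply, smul_eq_mul, Finset.sum_apply, Pi.zero_apply]
          rw [hvother i, hgi i]
          ring
      have hall := Fintype.linearIndependent_iff.mp hφ.indep Gg hzero
      intro x
      have := hall ⟨x.1, hsubV x.2⟩
      rw [hGg] at this
      simp only [hxnev x.1 x.2, if_neg] at this
      rw [← hggval x]
      simpa using this
    · -- subgraphSum
      intro S hS hSne hSconn
      obtain ⟨T, hST, hTG, hTconn, hTcase⟩ := hconn S hS hSne hSconn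
      obtain ⟨γ, I, hγI, hTsum⟩ := hφ.subgraphSum T hTG (hSne.mono hST) hTconn
      have hTk : (∑ x ∈ T, φ x k) ≤ 0 := by
        rcases hTcase with rfl | ⟨rfl, hle⟩
        · exact Finset.sum_nonpos fun x hx => hφk0 x (hS hx)
        · rw [Finset.sum_insert (fun hvS => hvnot (hS hvS))]
          rw [hvkcoord]; omega
      have hγk : γ ≠ k := by
        rintro rfl
        have h1 := congrFun hTsum γ
        rw [Finset.sum_apply, Pi.sub_apply, eVec_sum_apply, if_neg hγI] at h1
        have h2 : eVec γ γ = 1 := by simp [eVec]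
        rw [h2] at h1
        omega
      obtain ⟨γ', hγ'⟩ := Fin.exists_succAbove_eq hγk
      refine ⟨γ', Finset.univ.filter (fun i => k.succAbove i ∈ I), ?_, ?_⟩
      · intro hmem
        rw [Finset.mem_filter] at hmem
        exact hγI (hγ' ▸ hmem.2)
      · funext i
        have hL : (∑ x ∈ S, (fun x => fun i : Fin N => φ x (k.succAbove i)) x) i
            = (∑ x ∈ T, φ x) (k.succAbove i) := by
          rw [Finset.sum_apply, Finset.sum_apply]
          rcases hTcase with rfl | ⟨rfl, _⟩
          · rfl
          · rw [Finset.sum_insert (fun hvS => hvnot (hS hvS)), hvother i, zero_add]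
        rw [hL, hTsum, Pi.sub_apply, Pi.sub_apply, eVec_sum_apply, eVec_sum_apply]
        have e1 : eVec γ (k.succAbove i) = eVec γ' i := by
          subst hγ'
          unfold eVec
          rw [Pi.single_apply, Pi.single_apply]
          have hinj : Function.Injective (k.succAbove) := Fin.succAbove_right_injective
          by_cases hi : i = γ'
          · subst hi; simp
          · rw [if_neg (fun h => hi (hinj h)), if_neg hi]
        rw [e1]
        simp only [Finset.mem_filter, Finset.mem_univ, true_and]
  · -- type 2
    intro hno j' h2
    obtain ⟨hpos, hneg⟩ := h2
    apply hno (k.succAbove j')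
    have hzero : φ v (k.succAbove j') = 0 := hvother j'
    constructor
    · unfold posCount at hpos ⊢
      rw [hverts, Finset.filter_insert, if_neg (by rw [hzero]; norm_num)]
      convert hpos using 2
    · unfold negCount at hneg ⊢
      rw [hverts, Finset.filter_insert, if_neg (by rw [hzero]; norm_num)]
      convert hneg using 2
end

section
/- Let Γ be a negative definite plumbing tree, E_0 a vertex of Γ, and Γ' the plumbing graph obtained from Γ by increasing the framing of E_0 by 1 (keeping all other framings and all edges). Then: (i) 𝒮(Γ') ⊆ 𝒮(Γ); and (ii) if D = ∑_v r_v·v ∈ 𝒮(Γ) satisfies r_{E_0} = 1 and Q_Γ(D, E_0) = −1, then D ∈ 𝒮(Γ'). -/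
open Finset

open Plumbing

/-- STATEMENT 18: let `Γ'` be obtained from the negative definite plumbing tree
`Γ` by increasing the framing of `E₀` by 1. Then (i) `𝒮(Γ') ⊆ 𝒮(Γ)`, and
(ii) any `D ∈ 𝒮(Γ)` with coefficient `1` at `E₀` and `Q_Γ(D, E₀) = -1` lies in
`𝒮(Γ')`. -/
theorem stmt18_lipman (G : Plumbing) (hTree : G.IsTree) (hNeg : G.NegDef)
    (E0 : ℕ) (hE0 : E0 ∈ G.verts) :
    (∀ r : ℕ → ℤ, InLipman (incFraming G E0) r → InLipman G r) ∧
    (∀ r : ℕ → ℤ, InLipman G r → r E0 = 1 →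
      (∑ u ∈ G.verts, r u * G.q u E0) = -1 → InLipman (incFraming G E0) r) := by
  have hq : ∀ u v, (incFraming G E0).q u v
      = G.q u v + (if u = E0 ∧ v = E0 then 1 else 0) := by
    intro u v
    simp only [Plumbing.q, Plumbing.incFraming]
    by_cases huv : u = v
    · subst huv
      by_cases hu : u = E0
      · subst hu
        simp [Function.update_self]
      · simp [Function.update_of_ne hu, hu]
    · have : ¬(u = E0 ∧ v = E0) := fun h => huv (h.1.trans h.2.symm)
      simp [huv, this]
      rfl
  have hsum : ∀ (r : ℕ → ℤ) (v : ℕ),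
      (∑ u ∈ (incFraming G E0).verts, r u * (incFraming G E0).q u v)
      = (∑ u ∈ G.verts, r u * G.q u v) + (if v = E0 then r E0 else 0) := by
    intro r v
    have hverts : (incFraming G E0).verts = G.verts := rfl
    rw [hverts]
    by_cases hv : v = E0
    · subst v
      have : ∀ u ∈ G.verts, r u * (incFraming G E0).q u E0
          = r u * G.q u E0 + (if u = E0 then r u else 0) := by
        intro u _
        rw [hq]
        by_cases hu : u = E0 <;> simp [hu] <;> ring
      rw [Finset.sum_congr rfl this, Finset.sum_add_distrib,
        Finset.sum_ite_eq' G.verts E0 r]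
      simp [hE0]
    · simp only [hv, if_false, add_zero]
      refine Finset.sum_congr rfl fun u _ => ?_
      rw [hq]
      simp [hv]
  constructor
  · intro r ⟨hpos, hle⟩
    refine ⟨hpos, fun v hv => ?_⟩
    have h := hle v hv
    rw [hsum] at h
    by_cases hvE : v = E0
    · subst v
      have := hpos E0 hE0
      simp only [if_pos rfl] at h
      omega
    · simpa [hvE] using h
  · intro r ⟨hpos, hle⟩ hr1 hQ
    refine ⟨hpos, fun v hv => ?_⟩
    rw [hsum]
    by_cases hvE : v = E0
    · subst v; rw [hQ]; simp [hr1]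
    · simp only [hvE, if_false, add_zero]
      exact hle v hv
end

section
/- Let Γ be a negative definite plumbing tree with at least two vertices admitting an s-embedding φ, and let l be a leaf of Γ with positive basis element e_l (i.e. φ(l) = e_l − ∑_{i∈V_l} e_i with l's positive part e_l). Then e_l is of type 1 or of type 3; in particular e_l cannot be of type 4. Moreover, at most one leaf of Γ has its positive basis element of type 1; consequently Γ has a leaf whose positive basis element is of type 3. -/
open Finset

open Plumbing

namespace Aux
variable {N : ℕ}

def ind (S : Finset (Fin N)) (k : Fin N) : ℤ := if k ∈ S then 1 else 0

lemma eVec_apply (a k : Fin N) : eVec a k = ind {a} k := by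
  simp [eVec, ind, Pi.single_apply]

lemma sum_eVec_apply (I : Finset (Fin N)) (k : Fin N) :
    (∑ j ∈ I, eVec j) k = ind I k := by
  rw [Finset.sum_apply]
  simp only [eVec, Pi.single_apply, ind]
  exact Finset.sum_ite_eq I k fun _ => 1

lemma sub_apply' (γ : Fin N) (I : Finset (Fin N)) (k : Fin N) :
    (eVec γ - ∑ j ∈ I, eVec j) k = ind {γ} k - ind I k := by
  rw [Pi.sub_apply, eVec_apply, sum_eVec_apply]

lemma sum_ind (S : Finset (Fin N)) : ∑ k, ind S k = (S.card : ℤ) := by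
  simp [ind, Finset.sum_ite_mem]

lemma ind_mul_ind (S T : Finset (Fin N)) (k : Fin N) :
    ind S k * ind T k = ind (S ∩ T) k := by
  unfold ind
  by_cases hS : k ∈ S <;> by_cases hT : k ∈ T <;> simp [hS, hT, Finset.mem_inter]

lemma prod_sum (A B C D : Finset (Fin N)) :
    ∑ k, (ind A k - ind B k) * (ind C k - ind D k) =
      ((A ∩ C).card : ℤ) - ((A ∩ D).card : ℤ) - ((B ∩ C).card : ℤ) + ((B ∩ D).card : ℤ) := by
  have : ∀ k : Fin N, (ind A k - ind B k) * (ind C k - ind D k) =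
      ind (A ∩ C) k - ind (A ∩ D) k - (ind (B ∩ C) k - ind (B ∩ D) k) := by
    intro k
    rw [← ind_mul_ind, ← ind_mul_ind, ← ind_mul_ind, ← ind_mul_ind]
    ring
  rw [Finset.sum_congr rfl fun k _ => this k]
  rw [Finset.sum_sub_distrib, Finset.sum_sub_distrib, Finset.sum_sub_distrib,
    sum_ind, sum_ind, sum_ind, sum_ind]
  ring

lemma helper_sum (s : Finset ℕ) (f : ℕ → ℤ)
    (h : ∀ v ∈ s, f v = 1 ∨ f v = 0 ∨ f v = -1) :
    ∑ v ∈ s, f v =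
      ((s.filter fun v => f v = 1).card : ℤ) - ((s.filter fun v => f v = -1).card : ℤ) := by
  induction s using Finset.induction_on with
  | empty => simp
  | @insert a s ha ih =>
    rw [Finset.sum_insert ha, Finset.filter_insert, Finset.filter_insert,
      ih fun v hv => h v (Finset.mem_insert_of_mem hv)]
    have hnot1 : a ∉ s.filter fun v => f v = 1 := fun hc => ha (Finset.mem_of_mem_filter a hc)
    have hnotm : a ∉ s.filter fun v => f v = -1 := fun hc => ha (Finset.mem_of_mem_filter a hc)
    rcases h a (Finset.mem_insert_self a s) with h1 | h0 | hm
    · rw [if_pos h1, if_neg (by omega), Finset.card_insert_of_notMem hnot1]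
      push_cast; omega
    · rw [if_neg (by omega), if_neg (by omega)]; omega
    · rw [if_neg (by omega), if_pos hm, Finset.card_insert_of_notMem hnotm]
      push_cast; omega

end Aux

namespace Aux
open Plumbing SimpleGraph

/-- A degree-one vertex has a unique neighbour. -/
lemma uniq_neighbor (G : Plumbing) {l : ℕ} (hdeg : G.degree l = 1) :
    ∃ w, ∀ x, G.toSG.Adj l x ↔ x = w := by
  obtain ⟨w, hw⟩ := Finset.card_eq_one.mp hdeg
  refine ⟨w, fun x => ⟨fun hx => ?_, fun hx => ?_⟩⟩
  · have hxv : x ∈ G.verts := (G.adj_support l x hx).2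
    have : x ∈ G.verts.filter fun u => G.adj l u = true := Finset.mem_filter.mpr ⟨hxv, hx⟩
    rw [hw, Finset.mem_singleton] at this
    exact this
  · rw [hx]
    have : w ∈ G.verts.filter fun u => G.adj l u = true := by
      rw [hw]; exact Finset.mem_singleton_self w
    exact (Finset.mem_filter.mp this).2

/-- Walks inside `verts` between vertices different from a degree-one vertex `l`
can be rerouted to avoid `l`. -/
lemma walk_avoid (G : Plumbing) {l : ℕ} (hdeg : G.degree l = 1) :
    ∀ n (u v : ℕ) (p : G.toSG.Walk u v), p.length = n → u ≠ l → v ≠ l →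
      (∀ x ∈ p.support, x ∈ G.verts) →
      ∃ q : G.toSG.Walk u v, (∀ x ∈ q.support, x ∈ G.verts) ∧ l ∉ q.support := by
  obtain ⟨w, hw⟩ := uniq_neighbor G hdeg
  intro n
  induction n using Nat.strong_induction_on with
  | _ n ih =>
    intro u v p hlen hu hv hsupp
    by_cases hl : l ∈ p.support
    · set p1 := p.takeUntil l hl with hp1
      set p2 := p.dropUntil l hl with hp2
      obtain ⟨x, h1, q1, hq1⟩ := Walk.exists_eq_cons_of_ne (fun e => hu e.symm) p1.reverse
      obtain ⟨y, h2, q2, hq2⟩ := Walk.exists_eq_cons_of_ne (Ne.symm hv) p2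
      have hxw : x = w := (hw x).mp h1
      have hyw : y = w := (hw y).mp h2
      subst hxw; subst hyw
      have hlensum : p1.length + p2.length = p.length := by
        conv_rhs => rw [← Walk.take_spec p hl]
        rw [Walk.length_append]
      have hl1 : p1.length = q1.length + 1 := by
        have := congrArg Walk.length hq1
        rw [Walk.length_reverse, Walk.length_cons] at this
        exact this
      have hl2 : p2.length = q2.length + 1 := by
        have := congrArg Walk.length hq2
        rw [Walk.length_cons] at this
        exact this
      set q := q1.reverse.append q2 with hq
      have hqlen : q.length + 2 = n := by
        rw [hq, Walk.length_append, Walk.length_reverse]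
        omega
      have hsq : ∀ x ∈ q.support, x ∈ G.verts := by
        intro z hz
        rw [hq, Walk.mem_support_append_iff] at hz
        rcases hz with hz | hz
        · rw [Walk.support_reverse, List.mem_reverse] at hz
          apply hsupp
          have : z ∈ p1.reverse.support := by
            rw [hq1, Walk.support_cons]
            exact List.mem_cons_of_mem l hz
          rw [Walk.support_reverse, List.mem_reverse] at this
          exact Walk.support_takeUntil_subset p hl this
        · apply hsupp
          have : z ∈ p2.support := by
            rw [hq2, Walk.support_cons]
            exact List.mem_cons_of_mem l hz
          exact Walk.support_dropUntil_subset p hl this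
      exact ih q.length (by omega) u v q rfl hu hv hsq
    · exact ⟨p, hsupp, hl⟩

/-- Removing a leaf from a connected plumbing graph keeps it connected. -/
lemma connOn_erase (G : Plumbing) {l : ℕ} (hconn : G.ConnOn G.verts)
    (hdeg : G.degree l = 1) : G.ConnOn (G.verts.erase l) := by
  intro u hu v hv
  have hu' := Finset.mem_of_mem_erase hu
  have hv' := Finset.mem_of_mem_erase hv
  have hul : u ≠ l := Finset.ne_of_mem_erase hu
  have hvl : v ≠ l := Finset.ne_of_mem_erase hv
  obtain ⟨p, hp⟩ := hconn u hu' v hv'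
  obtain ⟨q, hq1, hq2⟩ := walk_avoid G hdeg p.length u v p rfl hul hvl hp
  exact ⟨q, fun x hx => Finset.mem_erase.mpr ⟨fun e => hq2 (e ▸ hx), hq1 x hx⟩⟩

/-- The endpoint of a maximum-length path in an acyclic plumbing graph is a leaf. -/
lemma endpoint_deg_one (G : Plumbing) (hforest : G.IsForest) {u v : ℕ}
    (p : G.toSG.Walk u v) (hp : p.IsPath) (hsupp : ∀ x ∈ p.support, x ∈ G.verts)
    (hlen : 1 ≤ p.length)
    (hmax : ∀ (x y : ℕ) (q : G.toSG.Walk x y), q.IsPath →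
      (∀ z ∈ q.support, z ∈ G.verts) → q.length ≤ p.length) :
    G.degree u = 1 := by
  cases p with
  | nil => simp at hlen
  | cons h q =>
    rename_i y
    rw [Walk.cons_isPath_iff] at hp
    unfold Plumbing.degree
    rw [Finset.card_eq_one]
    refine ⟨y, Finset.eq_singleton_iff_unique_mem.mpr ⟨Finset.mem_filter.mpr
      ⟨(G.adj_support u y h).2, h⟩, ?_⟩⟩
    intro x hx
    obtain ⟨hxv, hadj⟩ := Finset.mem_filter.mp hx
    by_contra hxy
    have hxu : x ≠ u := fun e => by
      rw [e] at hadj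
      exact absurd hadj (by simp [G.adj_irrefl u])
    by_cases hxs : x ∈ (Walk.cons h q).support
    · have hxq : x ∈ q.support := by
        rw [Walk.support_cons] at hxs
        rcases List.mem_cons.mp hxs with h' | h'
        · exact absurd h' hxu
        · exact h'
      have hP1 : (Walk.cons h (q.takeUntil x hxq)).IsPath := by
        rw [Walk.cons_isPath_iff]
        exact ⟨hp.1.takeUntil hxq, fun hc => hp.2 (Walk.support_takeUntil_subset q hxq hc)⟩
      have hP2 : (Walk.cons (show G.toSG.Adj u x from hadj) Walk.nil).IsPath := by
        rw [Walk.cons_isPath_iff]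
        simp [hxu.symm]
      have huniq := (isAcyclic_iff_path_unique.mp hforest)
        ⟨Walk.cons h (q.takeUntil x hxq), hP1⟩ ⟨Walk.cons (show G.toSG.Adj u x from hadj) Walk.nil, hP2⟩
      have hwalks : Walk.cons h (q.takeUntil x hxq) = Walk.cons (show G.toSG.Adj u x from hadj) Walk.nil :=
        congrArg Subtype.val huniq
      have hs := congrArg Walk.support hwalks
      rw [Walk.support_cons, Walk.support_cons, Walk.support_nil,
        Walk.support_eq_cons (q.takeUntil x hxq)] at hs
      simp at hs
      exact hxy (by have h2 := (q.takeUntil x hxq).support_eq_cons; rw [hs] at h2; exact (List.cons.inj h2).1)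
    · have hext : (Walk.cons (G.toSG.adj_symm (show G.toSG.Adj u x from hadj)) (Walk.cons h q)).IsPath := by
        rw [Walk.cons_isPath_iff]
        exact ⟨(Walk.cons_isPath_iff _ _).mpr hp, hxs⟩
      have := hmax x v _ hext (by
        intro z hz
        rw [Walk.support_cons] at hz
        rcases List.mem_cons.mp hz with hz | hz
        · exact hz ▸ hxv
        · exact hsupp z hz)
      rw [Walk.length_cons] at this
      omega

/-- A tree with at least two vertices has two distinct leaves. -/
lemma two_leaves (G : Plumbing) (hTree : G.IsTree) (hcard : 2 ≤ G.verts.card) :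
    ∃ l₁ l₂, l₁ ∈ G.verts ∧ l₂ ∈ G.verts ∧ l₁ ≠ l₂ ∧
      G.degree l₁ = 1 ∧ G.degree l₂ = 1 := by
  obtain ⟨u₀, hu₀, v₀, hv₀, huv₀⟩ := Finset.one_lt_card.mp (by omega : 1 < G.verts.card)
  obtain ⟨p₀, hp₀⟩ := hTree.2 u₀ hu₀ v₀ hv₀
  set L : Set ℕ := {n | ∃ (u v : ℕ) (p : G.toSG.Walk u v), p.IsPath ∧
    (∀ x ∈ p.support, x ∈ G.verts) ∧ p.length = n} with hL
  have hbound : ∀ n ∈ L, n ≤ G.verts.card := by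
    rintro n ⟨u, v, p, hp, hs, rfl⟩
    have hnd := hp.support_nodup
    have hsub : p.support.toFinset ⊆ G.verts := fun z hz =>
      hs z (List.mem_toFinset.mp hz)
    have := Finset.card_le_card hsub
    rw [List.toFinset_card_of_nodup hnd] at this
    rw [Walk.length_support] at this
    omega
  have hne : L.Nonempty := by
    refine ⟨(p₀.toPath : G.toSG.Walk u₀ v₀).length, u₀, v₀, p₀.toPath, p₀.toPath.2,
      fun x hx => hp₀ x (Walk.support_toPath_subset p₀ hx), rfl⟩
  have hbdd : BddAbove L := ⟨G.verts.card, fun n hn => hbound n hn⟩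
  obtain ⟨u, v, p, hp, hs, hplen⟩ := Nat.sSup_mem hne hbdd
  have hmax : ∀ (x y : ℕ) (q : G.toSG.Walk x y), q.IsPath →
      (∀ z ∈ q.support, z ∈ G.verts) → q.length ≤ p.length := by
    intro x y q hq hqs
    rw [hplen]
    exact le_csSup hbdd ⟨x, y, q, hq, hqs, rfl⟩
  have h1len : 1 ≤ p.length := by
    have h0 : (p₀.toPath : G.toSG.Walk u₀ v₀).length ≤ p.length :=
      hmax _ _ _ p₀.toPath.2 (fun x hx => hp₀ x (Walk.support_toPath_subset p₀ hx))
    rcases Nat.eq_zero_or_pos (p₀.toPath : G.toSG.Walk u₀ v₀).length with h | h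
    · exact absurd (Walk.eq_of_length_eq_zero h) huv₀
    · omega
  have hdu : G.degree u = 1 := endpoint_deg_one G hTree.1 p hp hs h1len hmax
  have hdv : G.degree v = 1 := by
    refine endpoint_deg_one G hTree.1 p.reverse hp.reverse
      (fun x hx => hs x (by rwa [Walk.support_reverse, List.mem_reverse] at hx))
      (by rwa [Walk.length_reverse]) ?_
    intro x y q hq hqs
    rw [Walk.length_reverse]
    exact hmax x y q hq hqs
  have huvne : u ≠ v := by
    cases p with
    | nil => simp at h1len
    | cons h q =>
      intro e
      rw [Walk.cons_isPath_iff] at hp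
      exact hp.2 (e ▸ q.end_mem_support)
  exact ⟨u, v, hs u p.start_mem_support, hs v p.end_mem_support, huvne, hdu, hdv⟩

end Aux

/-- STATEMENT 19: in a negative definite plumbing tree with at least two vertices
and an s-embedding, the positive basis element of any leaf is of type 1 or 3
(never of type 4); at most one leaf has its positive basis element of type 1;
consequently some leaf has its positive basis element of type 3. -/
theorem stmt19_leaves {N : ℕ} (G : Plumbing) (hTree : G.IsTree) (hNeg : G.NegDef)
    (hcard : 2 ≤ G.verts.card) (φ : ℕ → Fin N → ℤ) (hφ : G.IsSEmb φ) :
    (∀ l ∈ G.verts, G.degree l = 1 →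
      ∀ (a : Fin N) (V : Finset (Fin N)), a ∉ V →
        φ l = eVec a - ∑ i ∈ V, eVec i →
        (IsType1 G φ a ∨ IsType3 G φ a)) ∧
    (∀ l ∈ G.verts, ∀ l' ∈ G.verts, G.degree l = 1 → G.degree l' = 1 →
      ∀ (a a' : Fin N) (V V' : Finset (Fin N)), a ∉ V → a' ∉ V' →
        φ l = eVec a - ∑ i ∈ V, eVec i → φ l' = eVec a' - ∑ i ∈ V', eVec i →
        IsType1 G φ a → IsType1 G φ a' → l = l') ∧
    (∃ l ∈ G.verts, G.degree l = 1 ∧ ∃ (a : Fin N) (V : Finset (Fin N)),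
      a ∉ V ∧ φ l = eVec a - ∑ i ∈ V, eVec i ∧ IsType3 G φ a) := by
  classical
  -- decomposition of each vertex image
  have hdecomp : ∀ v ∈ G.verts, ∃ (a : Fin N) (V : Finset (Fin N)), a ∉ V ∧
      φ v = eVec a - ∑ j ∈ V, eVec j := by
    intro v hv
    have hconn : G.ConnOn {v} := by
      intro u hu w hw
      rw [Finset.mem_singleton] at hu hw
      subst hu; subst hw
      exact ⟨SimpleGraph.Walk.nil, by simp⟩
    obtain ⟨γ, I, hγ, hsum⟩ := hφ.subgraphSum {v} (Finset.singleton_subset_iff.mpr hv)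
      ⟨v, Finset.mem_singleton_self v⟩ hconn
    rw [Finset.sum_singleton] at hsum
    exact ⟨γ, I, hγ, hsum⟩
  -- entries of vertex images are in {-1,0,1}
  have hentry : ∀ v ∈ G.verts, ∀ k, φ v k = 1 ∨ φ v k = 0 ∨ φ v k = -1 := by
    intro v hv k
    obtain ⟨a, V, haV, hd⟩ := hdecomp v hv
    have h := congrFun hd k
    rw [Aux.sub_apply'] at h
    unfold Aux.ind at h
    split_ifs at h <;> omega
  -- coefficient of connected subgraph sums
  have hcoeff : ∀ S : Finset ℕ, S ⊆ G.verts → S.Nonempty → G.ConnOn S →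
      ∃ (γ : Fin N) (I : Finset (Fin N)), γ ∉ I ∧
        ∀ k, ∑ v ∈ S, φ v k = Aux.ind {γ} k - Aux.ind I k := by
    intro S h1 h2 h3
    obtain ⟨γ, I, hγ, hsum⟩ := hφ.subgraphSum S h1 h2 h3
    refine ⟨γ, I, hγ, fun k => ?_⟩
    have h := congrFun hsum k
    rw [Aux.sub_apply'] at h
    rw [← h, Finset.sum_apply]
  -- positive entry of a decomposed vertex
  have hlaOf : ∀ (a : Fin N) (V : Finset (Fin N)), a ∉ V → ∀ l : ℕ,
      φ l = eVec a - ∑ i ∈ V, eVec i → φ l a = 1 := by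
    intro a V haV l hdl
    have h := congrFun hdl a
    rw [Aux.sub_apply'] at h
    unfold Aux.ind at h
    rw [h]
    simp [haV]
  -- posCount: the filter is exactly {l}
  have hpos : ∀ l ∈ G.verts, ∀ (a : Fin N) (V : Finset (Fin N)), a ∉ V →
      φ l = eVec a - ∑ i ∈ V, eVec i →
      G.verts.filter (fun v => φ v a = 1) = {l} := by
    intro l hl a V haV hdl
    have hla : φ l a = 1 := hlaOf a V haV l hdl
    refine Finset.eq_singleton_iff_unique_mem.mpr ⟨Finset.mem_filter.mpr ⟨hl, hla⟩, ?_⟩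
    intro v hv
    obtain ⟨hvmem, hva⟩ := Finset.mem_filter.mp hv
    by_contra hvl
    obtain ⟨a', V', haV', hdv⟩ := hdecomp v hvmem
    have key := congrFun hdv a
    rw [Aux.sub_apply', hva] at key
    have e1 : a = a' := by
      by_contra e
      unfold Aux.ind at key
      rw [if_neg (by simp [e])] at key
      split_ifs at key <;> omega
    subst e1
    have e2 : a ∉ V' := by
      intro hmem
      unfold Aux.ind at key
      rw [if_pos (Finset.mem_singleton_self a), if_pos hmem] at key
      omega
    have hpair := hφ.pairing l hl v hvmem
    have hsum : ∑ k, φ l k * φ v k = 1 + ((V ∩ V').card : ℤ) := by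
      calc ∑ k, φ l k * φ v k
          = ∑ k, (Aux.ind {a} k - Aux.ind V k) * (Aux.ind {a} k - Aux.ind V' k) :=
            Finset.sum_congr rfl fun k _ => by
              rw [congrFun hdl k, congrFun hdv k, Aux.sub_apply', Aux.sub_apply']
        _ = ((({a} : Finset (Fin N)) ∩ {a}).card : ℤ) - ((({a} : Finset (Fin N)) ∩ V').card : ℤ)
              - ((V ∩ ({a} : Finset (Fin N))).card : ℤ) + ((V ∩ V').card : ℤ) :=
            Aux.prod_sum _ _ _ _
        _ = 1 + ((V ∩ V').card : ℤ) := by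
            rw [Finset.inter_self, Finset.singleton_inter_of_notMem e2,
              Finset.inter_singleton_of_notMem haV]
            simp
    have hq : 0 ≤ G.q l v := by
      unfold Plumbing.q
      rw [if_neg (fun e => hvl e.symm)]
      split_ifs <;> omega
    unfold diagPair at hpair
    rw [hsum] at hpair
    have hc : (0 : ℤ) ≤ ((V ∩ V').card : ℤ) := Int.natCast_nonneg _
    omega
  -- negCount bound for leaves
  have hneg : ∀ l ∈ G.verts, G.degree l = 1 → ∀ (a : Fin N) (V : Finset (Fin N)), a ∉ V →
      φ l = eVec a - ∑ i ∈ V, eVec i → G.negCount φ a ≤ 1 := by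
    intro l hl hdeg a V haV hdl
    have hla : φ l a = 1 := hlaOf a V haV l hdl
    have hSsub : G.verts.erase l ⊆ G.verts := Finset.erase_subset l G.verts
    have hSne : (G.verts.erase l).Nonempty := by
      rw [← Finset.card_pos, Finset.card_erase_of_mem hl]
      omega
    have hSconn := Aux.connOn_erase G hTree.2 hdeg
    obtain ⟨γ, I, hγI, hkey⟩ := hcoeff (G.verts.erase l) hSsub hSne hSconn
    have hsplit : ∑ v ∈ G.verts.erase l, φ v a =
        (((G.verts.erase l).filter fun v => φ v a = 1).card : ℤ) -
        (((G.verts.erase l).filter fun v => φ v a = -1).card : ℤ) :=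
      Aux.helper_sum _ _ (fun v hv => hentry v (hSsub hv) a)
    have hf1 : (G.verts.erase l).filter (fun v => φ v a = 1) = ∅ := by
      rw [Finset.filter_erase, hpos l hl a V haV hdl, Finset.erase_singleton]
    have hf2 : (G.verts.erase l).filter (fun v => φ v a = -1) =
        G.verts.filter (fun v => φ v a = -1) := by
      rw [Finset.filter_erase]
      apply Finset.erase_eq_of_notMem
      simp [Finset.mem_filter, hla]
    have hk := hkey a
    rw [hsplit, hf1, hf2] at hk
    unfold Plumbing.negCount
    unfold Aux.ind at hk
    simp only [Finset.card_empty, Nat.cast_zero] at hk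
    split_ifs at hk <;> omega
  -- Part 1
  have part1 : ∀ l ∈ G.verts, G.degree l = 1 →
      ∀ (a : Fin N) (V : Finset (Fin N)), a ∉ V →
        φ l = eVec a - ∑ i ∈ V, eVec i →
        (IsType1 G φ a ∨ IsType3 G φ a) := by
    intro l hl hdeg a V haV hdl
    have hp1 : G.posCount φ a = 1 := by
      unfold Plumbing.posCount
      rw [hpos l hl a V haV hdl]
      rfl
    have hn := hneg l hl hdeg a V haV hdl
    rcases Nat.le_one_iff_eq_zero_or_eq_one.mp hn with h0 | h1
    · exact Or.inl ⟨hp1, h0⟩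
    · exact Or.inr ⟨hp1, h1⟩
  -- Part 2
  have part2 : ∀ l ∈ G.verts, ∀ l' ∈ G.verts, G.degree l = 1 → G.degree l' = 1 →
      ∀ (a a' : Fin N) (V V' : Finset (Fin N)), a ∉ V → a' ∉ V' →
        φ l = eVec a - ∑ i ∈ V, eVec i → φ l' = eVec a' - ∑ i ∈ V', eVec i →
        IsType1 G φ a → IsType1 G φ a' → l = l' := by
    intro l hl l' hl' hdeg hdeg' a a' V V' haV haV' hdl hdl' ht ht'
    have hVne : G.verts.Nonempty := Finset.card_pos.mp (by omega)
    obtain ⟨γ, I, hγI, hkey⟩ := hcoeff G.verts (le_refl _) hVne hTree.2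
    have hbase : ∀ b : Fin N, G.posCount φ b = 1 → G.negCount φ b = 0 → b = γ := by
      intro b h1 h0
      have hs : ∑ v ∈ G.verts, φ v b =
          ((G.verts.filter fun v => φ v b = 1).card : ℤ) -
          ((G.verts.filter fun v => φ v b = -1).card : ℤ) :=
        Aux.helper_sum _ _ (fun v hv => hentry v hv b)
      rw [hkey b] at hs
      unfold Plumbing.posCount at h1
      unfold Plumbing.negCount at h0
      unfold Aux.ind at hs
      by_contra hbγ
      rw [if_neg (by simp [hbγ])] at hs
      split_ifs at hs <;> omega
    have ea : a = γ := hbase a ht.1 ht.2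
    have ea' : a' = γ := hbase a' ht'.1 ht'.2
    have haa : a = a' := by rw [ea, ea']
    have hml : l ∈ G.verts.filter (fun v => φ v a = 1) :=
      Finset.mem_filter.mpr ⟨hl, hlaOf a V haV l hdl⟩
    have hml' : l' ∈ G.verts.filter (fun v => φ v a = 1) := by
      refine Finset.mem_filter.mpr ⟨hl', ?_⟩
      rw [haa]
      exact hlaOf a' V' haV' l' hdl'
    have hcard1 : (G.verts.filter (fun v => φ v a = 1)).card ≤ 1 := by
      have := ht.1
      unfold Plumbing.posCount at this
      omega
    exact Finset.card_le_one.mp hcard1 l hml l' hml'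
  refine ⟨part1, part2, ?_⟩
  -- Part 3
  obtain ⟨l₁, l₂, h1m, h2m, h12, hd1, hd2⟩ := Aux.two_leaves G hTree hcard
  obtain ⟨a₁, V₁, hA1, hD1⟩ := hdecomp l₁ h1m
  obtain ⟨a₂, V₂, hA2, hD2⟩ := hdecomp l₂ h2m
  rcases part1 l₁ h1m hd1 a₁ V₁ hA1 hD1 with t1 | t3
  · rcases part1 l₂ h2m hd2 a₂ V₂ hA2 hD2 with t1' | t3'
    · exact absurd (part2 l₁ h1m l₂ h2m hd1 hd2 a₁ a₂ V₁ V₂ hA1 hA2 hD1 hD2 t1 t1') h12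
    · exact ⟨l₂, h2m, hd2, a₂, V₂, hA2, hD2, t3'⟩
  · exact ⟨l₁, h1m, hd1, a₁, V₁, hA1, hD1, t3⟩
end
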